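/- Let M be a multiplication L-module. For every proper element N ∈ M, N ≤ δ₁((N:I_M)N), and equality N = δ₁((N:I_M)N) holds if N is a prime element of M. -/
import Mathlib


open CompleteLattice

universe u v

/-- A multiplicative lattice: a complete lattice with a commutative, associative
multiplication distributing over arbitrary joins, whose top element is the
multiplicative identity. -/
class MultiplicativeLattice (L : Type u) extends CompleteLattice L, CommMonoid L where
  one_eq_top : (1 : L) = ⊤
  sSup_mul : ∀ (S : Set L) (b : L), sSup S * b = ⨆ a ∈ S, a * b

/-- A lattice module over a multiplicative lattice. -/
class LatticeModule (L : Type u) [MultiplicativeLattice L] (M : Type v)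
    extends CompleteLattice M, SMul L M where
  sSup_smul : ∀ (S : Set L) (A : M), (SupSet.sSup S : L) • A = ⨆ a ∈ S, a • A
  smul_sSup : ∀ (a : L) (S : Set M), a • sSup S = ⨆ B ∈ S, a • B
  mul_smul : ∀ (a b : L) (A : M), (a * b) • A = a • b • A
  one_smul : ∀ A : M, (1 : L) • A = A
  bot_smul : ∀ A : M, (⊥ : L) • A = (⊥ : M)

section LatticeDefs

variable {L : Type u} [MultiplicativeLattice L]

/-- The residual `(a : b)` in `L`. -/
def lColon (a b : L) : L := sSup {x : L | x * b ≤ a}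

/-- The radical `√a` of an element of `L`. -/
def radL (a : L) : L :=
  sSup {x : L | IsCompactElement x ∧ ∃ n : ℕ, 1 ≤ n ∧ x ^ n ≤ a}

/-- A principal element of a multiplicative lattice (meet principal and join principal). -/
def IsPrincipalElemL (e : L) : Prop :=
  (∀ a b : L, a ⊓ b * e = (lColon a e ⊓ b) * e) ∧
  (∀ a b : L, lColon (a * e ⊔ b) e = lColon b e ⊔ a)

/-- An expansion function on `L`. -/
def IsExpansionL (δ : L → L) : Prop :=
  (∀ a : L, a ≤ δ a) ∧ ∀ a b : L, a ≤ b → δ a ≤ δ b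

/-- A 2-absorbing element of `L`. -/
def Is2AbsorbingL (q : L) : Prop :=
  q < ⊤ ∧ ∀ a b c : L, a * b * c ≤ q → a * b ≤ q ∨ b * c ≤ q ∨ c * a ≤ q

/-- A 2-absorbing primary element of `L`. -/
def Is2AbsorbingPrimaryL (q : L) : Prop :=
  q < ⊤ ∧ ∀ a b c : L, a * b * c ≤ q → a * b ≤ q ∨ b * c ≤ radL q ∨ c * a ≤ radL q

/-- A `δL`-primary element of `L`. -/
def IsDeltaLPrimaryL (δL : L → L) (p : L) : Prop :=
  p < ⊤ ∧ ∀ a b : L, a * b ≤ p → a ≤ p ∨ b ≤ δL p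

end LatticeDefs

/-- `L` is a PG-lattice: every element is a join of principal elements. -/
def IsPGLattice (L : Type u) [MultiplicativeLattice L] : Prop :=
  ∀ a : L, a = sSup {e : L | IsPrincipalElemL e ∧ e ≤ a}

section ModuleDefs

variable (L : Type u) {M : Type v} [MultiplicativeLattice L] [LatticeModule L M]

/-- The element `(A : B)` of `L`, for `A B : M`. -/
def mColon (A B : M) : L := sSup {x : L | x • B ≤ A}

/-- The element `(N : a)` of `M`, for `N : M`, `a : L`. -/
def resColon (N : M) (a : L) : M := sSup {X : M | a • X ≤ N}

/-- An expansion function on the `L`-module `M`. -/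
def IsExpansionM (δ : M → M) : Prop :=
  (∀ A : M, A ≤ δ A) ∧ ∀ A B : M, A ≤ B → δ A ≤ δ B

/-- A `δ`-primary element of the `L`-module `M`. -/
def IsDeltaPrimaryM (δ : M → M) (P : M) : Prop :=
  P < ⊤ ∧ ∀ (a : L) (A : M), a • A ≤ P → A ≤ P ∨ a • (⊤ : M) ≤ δ P

/-- A prime element of the `L`-module `M`. -/
def IsPrimeM (P : M) : Prop :=
  P < ⊤ ∧ ∀ (a : L) (A : M), a • A ≤ P → A ≤ P ∨ a • (⊤ : M) ≤ P

/-- A primary element of the `L`-module `M`. -/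
def IsPrimaryM (P : M) : Prop :=
  P < ⊤ ∧ ∀ (a : L) (A : M), a • A ≤ P → A ≤ P ∨ ∃ n : ℕ, 1 ≤ n ∧ a ^ n • (⊤ : M) ≤ P

/-- A principal element of the `L`-module `M` (meet principal and join principal). -/
def IsPrincipalElemM (N : M) : Prop :=
  (∀ (b : L) (B : M), (b ⊓ mColon L B N) • N = b • N ⊓ B) ∧
  (∀ (b : L) (B : M), b ⊔ mColon L B N = mColon L (b • N ⊔ B) N)

/-- A maximal element of the `L`-module `M`. -/
def IsMaximalM (H : M) : Prop :=
  H < ⊤ ∧ ∀ B : M, H ≤ B → B = H ∨ B = ⊤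

/-- A meet prime element of the `L`-module `M`. -/
def IsMeetPrimeM (N : M) : Prop :=
  N < ⊤ ∧ ∀ A B : M, A ⊓ B ≤ N → A ≤ N ∨ B ≤ N

/-- The expansion function `δ₁` on a multiplication `L`-module `M`:
`δ₁(A) = (√(A : I_M)) I_M`. -/
def delta1 (A : M) : M := radL (mColon L A (⊤ : M)) • (⊤ : M)

/-- The expansion function `δ₂`: meet of all maximal elements above a proper element. -/
noncomputable def delta2 (A : M) : M := by
  classical exact if A = ⊤ then ⊤ else sInf {H : M | A ≤ H ∧ IsMaximalM L H}

/-- A 2-absorbing primary element of the `L`-module `M`. -/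
def Is2AbsorbingPrimaryM (Q : M) : Prop :=
  Q < ⊤ ∧ ∀ (a b : L) (N : M), (a * b) • N ≤ Q →
    a * b ≤ mColon L Q (⊤ : M) ∨
    b • N ≤ radL (mColon L Q (⊤ : M)) • (⊤ : M) ∨
    a • N ≤ radL (mColon L Q (⊤ : M)) • (⊤ : M)

/-- A `δL`-primary element of the `L`-module `M`, for an expansion function `δL` on `L`. -/
def IsDeltaLPrimaryM (δL : L → L) (P : M) : Prop :=
  P < ⊤ ∧ ∀ (a : L) (A : M), a • A ≤ P → A ≤ P ∨ a ≤ δL (mColon L P (⊤ : M))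

end ModuleDefs

/-- `M` is a PG-lattice `L`-module: every element is a join of principal elements. -/
def IsPGModule (L : Type u) (M : Type v) [MultiplicativeLattice L] [LatticeModule L M] : Prop :=
  ∀ N : M, N = sSup {E : M | IsPrincipalElemM L E ∧ E ≤ N}

/-- `M` is a multiplication `L`-module. -/
def IsMultiplicationModule (L : Type u) (M : Type v)
    [MultiplicativeLattice L] [LatticeModule L M] : Prop :=
  ∀ N : M, ∃ a : L, N = a • (⊤ : M)

/-- `M` is a faithful `L`-module: `(O_M : I_M) = 0`. -/
def IsFaithfulModule (L : Type u) (M : Type v)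
    [MultiplicativeLattice L] [LatticeModule L M] : Prop :=
  mColon L (⊥ : M) (⊤ : M) = (⊥ : L)

section Helpers

variable {L : Type u} {M : Type v} [MultiplicativeLattice L] [LatticeModule L M]

lemma smul_mono_left' {a b : L} (h : a ≤ b) (A : M) : a • A ≤ b • A := by
  have : (sSup {a, b} : L) • A = ⨆ x ∈ ({a, b} : Set L), x • A :=
    LatticeModule.sSup_smul _ _
  have hs : (sSup {a, b} : L) = b := by
    rw [sSup_pair]; exact sup_eq_right.mpr h
  rw [hs] at this
  rw [this]
  exact le_biSup (fun x => x • A) (by simp)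

lemma smul_mono_right' (a : L) {A B : M} (h : A ≤ B) : a • A ≤ a • B := by
  have : a • (sSup {A, B} : M) = ⨆ X ∈ ({A, B} : Set M), a • X :=
    LatticeModule.smul_sSup _ _
  have hs : (sSup {A, B} : M) = B := by
    rw [sSup_pair]; exact sup_eq_right.mpr h
  rw [hs] at this
  rw [this]
  exact le_biSup (fun X => a • X) (by simp)

lemma mul_mono_left' {a b : L} (h : a ≤ b) (c : L) : a * c ≤ b * c := by
  have : (sSup {a, b} : L) * c = ⨆ x ∈ ({a, b} : Set L), x * c :=
    MultiplicativeLattice.sSup_mul _ _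
  have hs : (sSup {a, b} : L) = b := by
    rw [sSup_pair]; exact sup_eq_right.mpr h
  rw [hs] at this
  rw [this]
  exact le_biSup (fun x => x * c) (by simp)

lemma mColon_smul_le (A B : M) : (mColon L A B) • B ≤ A := by
  rw [mColon, LatticeModule.sSup_smul]
  exact iSup₂_le fun x hx => hx

lemma le_mColon {x : L} {A B : M} (h : x • B ≤ A) : x ≤ mColon L A B :=
  le_sSup h

lemma smul_top_le_self (a : L) (A : M) : a • A ≤ A := by
  have h := smul_mono_left' (le_top : a ≤ (⊤ : L)) A
  rwa [← MultiplicativeLattice.one_eq_top, LatticeModule.one_smul] at h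

lemma mult_mColon_smul_top (hmult : IsMultiplicationModule L M) (N : M) :
    (mColon L N (⊤ : M)) • (⊤ : M) = N := by
  refine le_antisymm (mColon_smul_le _ _) ?_
  obtain ⟨b, hb⟩ := hmult N
  have hbN : b ≤ mColon L N (⊤ : M) := le_mColon (le_of_eq hb.symm)
  calc N = b • ⊤ := hb
    _ ≤ (mColon L N (⊤ : M)) • ⊤ := smul_mono_left' hbN _

lemma prime_pow_smul {N : M} (hP : IsPrimeM L N) (x : L) :
    ∀ n : ℕ, x ^ (n + 1) • (⊤ : M) ≤ N → x • (⊤ : M) ≤ N := by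
  intro n
  induction n with
  | zero => intro h; rwa [pow_one] at h
  | succ k ih =>
    intro h
    have hx : x • (x ^ (k + 1) • (⊤ : M)) ≤ N := by
      rw [← LatticeModule.mul_smul, ← pow_succ']
      exact h
    rcases hP.2 x _ hx with h1 | h1
    · exact ih h1
    · exact h1

end Helpers

theorem stmt17 {L : Type u} {M : Type v} [MultiplicativeLattice L] [LatticeModule L M]
    [IsCompactlyGenerated L]
    (h1cpt : IsCompactElement (1 : L))
    (hmulcpt : ∀ a b : L, IsCompactElement a → IsCompactElement b → IsCompactElement (a * b))
    (hmult : IsMultiplicationModule L M)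
    (N : M) (hN : N < ⊤) :
    N ≤ delta1 L (mColon L N (⊤ : M) • N) ∧
    (IsPrimeM L N → N = delta1 L (mColon L N (⊤ : M) • N)) := by
  set a := mColon L N (⊤ : M) with ha
  have haN : a • (⊤ : M) = N := mult_mColon_smul_top hmult N
  have haa : a • N = (a * a) • (⊤ : M) := by
    rw [LatticeModule.mul_smul, haN]
  set c := mColon L (a • N) (⊤ : M) with hc
  have haac : a * a ≤ c := le_mColon (by rw [← haa])
  have hcle : c • (⊤ : M) ≤ N := by
    calc c • (⊤ : M) ≤ a • N := mColon_smul_le _ _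
      _ ≤ N := smul_top_le_self _ _
  constructor
  · -- N ≤ delta1 (a • N)
    have hrad : a ≤ radL c := by
      conv_lhs => rw [← sSup_compact_le_eq a]
      apply _root_.sSup_le
      rintro x ⟨hxc, hxa⟩
      apply _root_.le_sSup
      refine ⟨hxc, 2, by norm_num, ?_⟩
      calc x ^ 2 = x * x := sq x
        _ ≤ a * x := mul_mono_left' hxa x
        _ = x * a := mul_comm _ _
        _ ≤ a * a := mul_mono_left' hxa a
        _ ≤ c := haac
    calc N = a • (⊤ : M) := haN.symm
      _ ≤ radL c • (⊤ : M) := smul_mono_left' hrad _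
      _ = delta1 L (a • N) := rfl
  · intro hP
    refine le_antisymm ?_ ?_
    · -- repeat first part
      have hrad : a ≤ radL c := by
        conv_lhs => rw [← sSup_compact_le_eq a]
        apply _root_.sSup_le
        rintro x ⟨hxc, hxa⟩
        apply _root_.le_sSup
        refine ⟨hxc, 2, by norm_num, ?_⟩
        calc x ^ 2 = x * x := sq x
          _ ≤ a * x := mul_mono_left' hxa x
          _ = x * a := mul_comm _ _
          _ ≤ a * a := mul_mono_left' hxa a
          _ ≤ c := haac
      calc N = a • (⊤ : M) := haN.symm
        _ ≤ radL c • (⊤ : M) := smul_mono_left' hrad _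
    · -- delta1 (a • N) ≤ N
      have hradle : radL c ≤ a := by
        apply _root_.sSup_le
        rintro x ⟨hxc, n, hn, hxn⟩
        have hxnN : x ^ n • (⊤ : M) ≤ N :=
          le_trans (smul_mono_left' hxn _) hcle
        obtain ⟨m, rfl⟩ := Nat.exists_eq_add_of_le hn
        have : x • (⊤ : M) ≤ N := prime_pow_smul hP x m (by rwa [Nat.add_comm] at hxnN)
        exact le_mColon this
      calc delta1 L (a • N) = radL c • (⊤ : M) := rfl
        _ ≤ a • (⊤ : M) := smul_mono_left' hradle _
        _ = N := haN
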